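/- arXiv:1709.01391 — 2 statements merged into one kernel-verified Lean document; each statement's English description precedes it below -/
import Mathlib

section
/- Let L be a finite-dimensional minimal nonnilpotent left Leibniz algebra that is a Lie algebra, with A the ideal as in Towers' decomposition (A/N the unique minimal ideal of L/N for N the core of a self-normalizing maximal subalgebra). Then A^3 = 0. -/
set_option linter.unnecessarySimpa false

/-- The left Leibniz identity for a bilinear bracket `B`. -/
def LeibnizId {F L : Type*} [Field F] [AddCommGroup L] [Module F L]
    (B : L →ₗ[F] L →ₗ[F] L) : Prop :=
  ∀ a b c : L, B a (B b c) = B (B a b) c + B b (B a c)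

/-- The span of all brackets `[s,t]` with `s ∈ S`, `t ∈ T`. -/
def lbrk {F L : Type*} [Field F] [AddCommGroup L] [Module F L]
    (B : L →ₗ[F] L →ₗ[F] L) (S T : Submodule F L) : Submodule F L :=
  Submodule.span F {z : L | ∃ s ∈ S, ∃ t ∈ T, z = B s t}

/-- A subspace closed under the bracket. -/
def IsLeibSubalg {F L : Type*} [Field F] [AddCommGroup L] [Module F L]
    (B : L →ₗ[F] L →ₗ[F] L) (S : Submodule F L) : Prop :=
  ∀ x ∈ S, ∀ y ∈ S, B x y ∈ S

/-- A (two-sided) ideal. -/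
def IsLeibIdeal {F L : Type*} [Field F] [AddCommGroup L] [Module F L]
    (B : L →ₗ[F] L →ₗ[F] L) (S : Submodule F L) : Prop :=
  (∀ x : L, ∀ y ∈ S, B x y ∈ S) ∧ (∀ y ∈ S, ∀ x : L, B y x ∈ S)

/-- Lower central series: `L^1 = L`, `L^{n+1} = [L, L^n]`. -/
def leibLCS {F L : Type*} [Field F] [AddCommGroup L] [Module F L]
    (B : L →ₗ[F] L →ₗ[F] L) : ℕ → Submodule F L
  | 0 => ⊤
  | n + 1 => lbrk B ⊤ (leibLCS B n)

def LeibIsNilpotent {F L : Type*} [Field F] [AddCommGroup L] [Module F L]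
    (B : L →ₗ[F] L →ₗ[F] L) : Prop :=
  ∃ n, leibLCS B n = ⊥

/-- Lower central series of a subalgebra `S`. -/
def leibLCSIn {F L : Type*} [Field F] [AddCommGroup L] [Module F L]
    (B : L →ₗ[F] L →ₗ[F] L) (S : Submodule F L) : ℕ → Submodule F L
  | 0 => S
  | n + 1 => lbrk B S (leibLCSIn B S n)

/-- A subalgebra `S` is nilpotent (as an algebra in its own right). -/
def LeibSubalgNilpotent {F L : Type*} [Field F] [AddCommGroup L] [Module F L]
    (B : L →ₗ[F] L →ₗ[F] L) (S : Submodule F L) : Prop :=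
  ∃ n, leibLCSIn B S n = ⊥

/-- Derived series. -/
def leibDerived {F L : Type*} [Field F] [AddCommGroup L] [Module F L]
    (B : L →ₗ[F] L →ₗ[F] L) : ℕ → Submodule F L
  | 0 => ⊤
  | n + 1 => lbrk B (leibDerived B n) (leibDerived B n)

def LeibIsSolvable {F L : Type*} [Field F] [AddCommGroup L] [Module F L]
    (B : L →ₗ[F] L →ₗ[F] L) : Prop :=
  ∃ n, leibDerived B n = ⊥

/-- The normalizer of a subspace `S`: elements `x` with `[x,S] ⊆ S` and `[S,x] ⊆ S`. -/
def leibNormalizer {F L : Type*} [Field F] [AddCommGroup L] [Module F L]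
    (B : L →ₗ[F] L →ₗ[F] L) (S : Submodule F L) : Submodule F L where
  carrier := {x : L | ∀ m ∈ S, B x m ∈ S ∧ B m x ∈ S}
  add_mem' := by
    intro x y hx hy m hm
    constructor
    · have := S.add_mem (hx m hm).1 (hy m hm).1
      simpa [map_add] using this
    · have := S.add_mem (hx m hm).2 (hy m hm).2
      simpa [map_add] using this
  zero_mem' := by
    intro m hm
    constructor
    · simpa [map_zero] using S.zero_mem
    · simpa [map_zero] using S.zero_mem
  smul_mem' := by
    intro c x hx m hm
    constructor
    · have := S.smul_mem c (hx m hm).1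
      simpa [map_smul] using this
    · have := S.smul_mem c (hx m hm).2
      simpa [map_smul] using this

/-- `Leib(L)`: the span of all squares. -/
def leibLeib {F L : Type*} [Field F] [AddCommGroup L] [Module F L]
    (B : L →ₗ[F] L →ₗ[F] L) : Submodule F L :=
  Submodule.span F {z : L | ∃ y : L, z = B y y}

/-- A maximal (proper) subalgebra. -/
def IsMaxSubalg {F L : Type*} [Field F] [AddCommGroup L] [Module F L]
    (B : L →ₗ[F] L →ₗ[F] L) (S : Submodule F L) : Prop :=
  IsLeibSubalg B S ∧ S ≠ ⊤ ∧ ∀ T : Submodule F L, IsLeibSubalg B T → S < T → T = ⊤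

/-- `N` is the core of `M`: the largest ideal of `L` contained in `M`. -/
def IsCore {F L : Type*} [Field F] [AddCommGroup L] [Module F L]
    (B : L →ₗ[F] L →ₗ[F] L) (M N : Submodule F L) : Prop :=
  IsLeibIdeal B N ∧ N ≤ M ∧ ∀ C : Submodule F L, IsLeibIdeal B C → C ≤ M → C ≤ N

/-- Minimal nonnilpotent: nonnilpotent, solvable, all proper subalgebras nilpotent. -/
def MinNonnilpotent {F L : Type*} [Field F] [AddCommGroup L] [Module F L]
    (B : L →ₗ[F] L →ₗ[F] L) : Prop :=
  ¬ LeibIsNilpotent B ∧ LeibIsSolvable B ∧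
    ∀ S : Submodule F L, IsLeibSubalg B S → S ≠ ⊤ → LeibSubalgNilpotent B S

/-- Cyclic: generated as an algebra by a single element. -/
def LeibCyclic {F L : Type*} [Field F] [AddCommGroup L] [Module F L]
    (B : L →ₗ[F] L →ₗ[F] L) : Prop :=
  ∃ z : L, ∀ S : Submodule F L, IsLeibSubalg B S → z ∈ S → S = ⊤

/-!
Since `L / N` is solvable, the minimal ideal `A / N` is abelian: `A² ⊆ N`. As `M` is
self-normalizing it is not an ideal, which forces `M + A = L` and `A = N + [M, A]`; iterating,
`A = N + V` with `V = [M, [M, …, A]]` (`2m` brackets, `M^m = 0`), and Leibniz' identity gives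
`[N, V] = 0`. If `Fx + V + V² = L` for some `x ∈ M`, then `A = V + V²`, so `[N, A] = 0` and
`A³ ⊆ [A, N] = 0`. Otherwise every `Fx + V + V²` is a proper, hence nilpotent, subalgebra, so
each `x ∈ M` acts nilpotently on `V`; by Engel's theorem `M` acts nilpotently on `V`, and then
`A = N`, a contradiction.
-/

section Bracket

variable {F L : Type*} [Field F] [AddCommGroup L] [Module F L] {B : L →ₗ[F] L →ₗ[F] L}
  {S S' T T' U : Submodule F L}

theorem mem_lbrk {s t : L} (hs : s ∈ S) (ht : t ∈ T) : B s t ∈ lbrk B S T :=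
  Submodule.subset_span ⟨s, hs, t, ht, rfl⟩

theorem lbrk_le (h : ∀ s ∈ S, ∀ t ∈ T, B s t ∈ U) : lbrk B S T ≤ U := by
  rw [lbrk, Submodule.span_le]
  rintro _ ⟨s, hs, t, ht, rfl⟩
  exact h s hs t ht

theorem lbrk_mono (hS : S ≤ S') (hT : T ≤ T') : lbrk B S T ≤ lbrk B S' T' :=
  lbrk_le fun _ hs _ ht => mem_lbrk (hS hs) (hT ht)

theorem monotone_lbrk : Monotone (lbrk B S) := fun _ _ h => lbrk_mono le_rfl h

theorem lbrk_sup_left_le : lbrk B (S ⊔ S') T ≤ lbrk B S T ⊔ lbrk B S' T := by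
  refine lbrk_le fun s hs t ht => ?_
  obtain ⟨s₁, hs₁, s₂, hs₂, rfl⟩ := Submodule.mem_sup.1 hs
  rw [map_add, LinearMap.add_apply]
  exact add_mem (Submodule.mem_sup_left (mem_lbrk hs₁ ht))
    (Submodule.mem_sup_right (mem_lbrk hs₂ ht))

theorem lbrk_sup_right_le : lbrk B S (T ⊔ T') ≤ lbrk B S T ⊔ lbrk B S T' := by
  refine lbrk_le fun s hs t ht => ?_
  obtain ⟨t₁, ht₁, t₂, ht₂, rfl⟩ := Submodule.mem_sup.1 ht
  rw [map_add]
  exact add_mem (Submodule.mem_sup_left (mem_lbrk hs ht₁))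
    (Submodule.mem_sup_right (mem_lbrk hs ht₂))

@[simp]
theorem lbrk_bot_left : lbrk B ⊥ T = ⊥ :=
  le_bot_iff.1 <| lbrk_le fun s hs _ _ => by simp [(Submodule.mem_bot F).1 hs]

@[simp]
theorem lbrk_bot_right : lbrk B S ⊥ = ⊥ :=
  le_bot_iff.1 <| lbrk_le fun _ _ t ht => by simp [(Submodule.mem_bot F).1 ht]

theorem iterate_lbrk_bot (k : ℕ) : (lbrk B S)^[k] ⊥ = ⊥ :=
  Function.iterate_fixed lbrk_bot_right k

theorem iterate_lbrk_sup_le (k : ℕ) :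
    (lbrk B S)^[k] (T ⊔ T') ≤ (lbrk B S)^[k] T ⊔ (lbrk B S)^[k] T' := by
  induction k with
  | zero => exact le_rfl
  | succ k ih =>
    simp only [Function.iterate_succ_apply']
    exact (monotone_lbrk ih).trans lbrk_sup_right_le

theorem iterate_lbrk_le_of_lbrk_le (h : lbrk B S T ≤ T) (k : ℕ) : (lbrk B S)^[k] T ≤ T := by
  induction k with
  | zero => exact le_rfl
  | succ k ih => exact (Function.iterate_succ_apply' _ k T).le.trans ((monotone_lbrk ih).trans h)

theorem lbrk_iterate_le_iterate (h : lbrk B S T ≤ T) (k : ℕ) :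
    lbrk B S ((lbrk B S)^[k] T) ≤ (lbrk B S)^[k] T := by
  rw [← Function.iterate_succ_apply' (lbrk B S), Function.iterate_succ_apply]
  exact monotone_lbrk.iterate k h

theorem iterate_lbrk_le_leibLCSIn (h : T ≤ S) (k : ℕ) : (lbrk B S)^[k] T ≤ leibLCSIn B S k := by
  induction k with
  | zero => exact h
  | succ k ih => exact (Function.iterate_succ_apply' _ k T).le.trans (monotone_lbrk ih)

theorem isLeibSubalg_iff : IsLeibSubalg B S ↔ lbrk B S S ≤ S :=
  ⟨fun h => lbrk_le h, fun h _ hx _ hy => h (mem_lbrk hx hy)⟩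

theorem IsLeibIdeal.lbrk_le_right (hS : IsLeibIdeal B S) : lbrk B T S ≤ S :=
  lbrk_le fun x _ y hy => hS.1 x y hy

theorem IsLeibIdeal.lbrk_le_left (hS : IsLeibIdeal B S) : lbrk B S T ≤ S :=
  lbrk_le fun y hy x _ => hS.2 y hy x

theorem IsLeibIdeal.sup (hS : IsLeibIdeal B S) (hT : IsLeibIdeal B T) : IsLeibIdeal B (S ⊔ T) := by
  constructor
  · intro x y hy
    obtain ⟨s, hs, t, ht, rfl⟩ := Submodule.mem_sup.1 hy
    rw [map_add]
    exact add_mem (Submodule.mem_sup_left (hS.1 x s hs)) (Submodule.mem_sup_right (hT.1 x t ht))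
  · intro y hy x
    obtain ⟨s, hs, t, ht, rfl⟩ := Submodule.mem_sup.1 hy
    rw [map_add, LinearMap.add_apply]
    exact add_mem (Submodule.mem_sup_left (hS.2 s hs x)) (Submodule.mem_sup_right (hT.2 t ht x))

theorem IsLeibSubalg.sup_of_isLeibIdeal (hS : IsLeibSubalg B S) (hT : IsLeibIdeal B T) :
    IsLeibSubalg B (S ⊔ T) := by
  rw [isLeibSubalg_iff] at hS ⊢
  refine lbrk_sup_left_le.trans (sup_le (lbrk_sup_right_le.trans (sup_le_sup hS ?_)) ?_)
  · exact hT.lbrk_le_right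
  · exact hT.lbrk_le_left.trans le_sup_right

theorem leibNormalizer_eq_top_of_isLeibIdeal (hS : IsLeibIdeal B S) : leibNormalizer B S = ⊤ :=
  eq_top_iff.2 fun x _ m hm => ⟨hS.1 x m hm, hS.2 m hm x⟩

end Bracket

section Lie

variable {F L : Type*} [Field F] [AddCommGroup L] [Module F L] {B : L →ₗ[F] L →ₗ[F] L}
  {S T U V : Submodule F L}

theorem bracket_antisymm (hLie : ∀ y : L, B y y = 0) (a b : L) : B a b = -B b a := by
  have h := hLie (a + b)
  simp only [map_add, LinearMap.add_apply, hLie a, hLie b, zero_add, add_zero] at h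
  exact eq_neg_of_add_eq_zero_right h

theorem lbrk_comm (hLie : ∀ y : L, B y y = 0) (I J : Submodule F L) :
    lbrk B I J = lbrk B J I := by
  have key : ∀ X Y : Submodule F L, lbrk B X Y ≤ lbrk B Y X := fun _ _ =>
    lbrk_le fun s hs t ht => by
      rw [bracket_antisymm hLie]
      exact neg_mem (mem_lbrk ht hs)
  exact le_antisymm (key I J) (key J I)

theorem isLeibIdeal_of_lbrk_top_le (hLie : ∀ y : L, B y y = 0) (h : lbrk B ⊤ S ≤ S) :
    IsLeibIdeal B S :=
  ⟨fun _ _ hy => h (mem_lbrk Submodule.mem_top hy),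
    fun _ hy _ => h (lbrk_comm hLie S ⊤ ▸ mem_lbrk hy Submodule.mem_top)⟩

theorem lbrk_span_singleton_self (hLie : ∀ y : L, B y y = 0) (x : L) :
    lbrk B (F ∙ x) (F ∙ x) = ⊥ :=
  le_bot_iff.1 <| lbrk_le fun s hs t ht => by
    obtain ⟨a, rfl⟩ := Submodule.mem_span_singleton.1 hs
    obtain ⟨b, rfl⟩ := Submodule.mem_span_singleton.1 ht
    simp [hLie]

theorem isLeibSubalg_span_singleton_sup (hLie : ∀ y : L, B y y = 0) {x : L}
    (hS : IsLeibSubalg B S) (hx : lbrk B (F ∙ x) S ≤ S) : IsLeibSubalg B ((F ∙ x) ⊔ S) := by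
  rw [isLeibSubalg_iff] at hS ⊢
  refine lbrk_sup_left_le.trans (sup_le ?_ ?_) <;> refine lbrk_sup_right_le.trans (sup_le ?_ ?_)
  · exact (lbrk_span_singleton_self hLie x).le.trans bot_le
  · exact hx.trans le_sup_right
  · exact (lbrk_comm hLie S _ ▸ hx).trans le_sup_right
  · exact hS.trans le_sup_right

theorem lbrk_lbrk_le (hB : LeibnizId B) :
    lbrk B S (lbrk B T U) ≤ lbrk B (lbrk B S T) U ⊔ lbrk B T (lbrk B S U) := by
  refine lbrk_le fun s hs w hw => Submodule.mem_comap.1 <| (lbrk_le fun t ht u hu => ?_) hw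
  rw [Submodule.mem_comap, hB s t u]
  exact add_mem (Submodule.mem_sup_left (mem_lbrk (mem_lbrk hs ht) hu))
    (Submodule.mem_sup_right (mem_lbrk ht (mem_lbrk hs hu)))

theorem IsLeibIdeal.lbrk (hB : LeibnizId B) (hLie : ∀ y : L, B y y = 0)
    (hS : IsLeibIdeal B S) (hT : IsLeibIdeal B T) : IsLeibIdeal B (lbrk B S T) :=
  isLeibIdeal_of_lbrk_top_le hLie <| (lbrk_lbrk_le hB).trans <|
    sup_le (lbrk_mono hS.lbrk_le_right le_rfl) (lbrk_mono le_rfl hT.lbrk_le_right)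

theorem lbrk_lbrk_self_le (hB : LeibnizId B) (h : lbrk B S V ≤ V) :
    lbrk B S (lbrk B V V) ≤ lbrk B V V :=
  (lbrk_lbrk_le hB).trans (sup_le (lbrk_mono h le_rfl) (lbrk_mono le_rfl h))

theorem lbrk_lbrk_self_eq_bot (hB : LeibnizId B) (h : lbrk B S V = ⊥) :
    lbrk B S (lbrk B V V) = ⊥ :=
  le_bot_iff.1 <| (lbrk_lbrk_le hB).trans (by simp [h])

end Lie

section MinimalIdeal

variable {F L : Type*} [Field F] [AddCommGroup L] [Module F L] {B : L →ₗ[F] L →ₗ[F] L}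
  {M N A S T V : Submodule F L}

/-- `A / N` is a minimal ideal of `L / N`. -/
def IsMinimalIdealOver (B : L →ₗ[F] L →ₗ[F] L) (N A : Submodule F L) : Prop :=
  IsLeibIdeal B A ∧ N < A ∧ ∀ C : Submodule F L, IsLeibIdeal B C → N < C → C ≤ A → C = A

theorem lbrk_sup_sup_le_of_isLeibIdeal (hN : IsLeibIdeal B N) :
    lbrk B (N ⊔ S) (N ⊔ T) ≤ N ⊔ lbrk B S T :=
  lbrk_sup_left_le.trans <| sup_le (hN.lbrk_le_left.trans le_sup_left) <|
    lbrk_sup_right_le.trans (sup_le_sup_right hN.lbrk_le_right _)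

theorem le_sup_leibDerived (hN : IsLeibIdeal B N) (h : A ≤ N ⊔ lbrk B A A) (k : ℕ) :
    A ≤ N ⊔ leibDerived B k := by
  induction k with
  | zero => exact le_sup_of_le_right le_top
  | succ k ih =>
    exact h.trans (sup_le le_sup_left ((lbrk_mono ih ih).trans (lbrk_sup_sup_le_of_isLeibIdeal hN)))

theorem le_of_le_sup_lbrk_self (hsolv : LeibIsSolvable B) (hN : IsLeibIdeal B N)
    (h : A ≤ N ⊔ lbrk B A A) : A ≤ N := by
  obtain ⟨k, hk⟩ := hsolv
  simpa [hk] using le_sup_leibDerived hN h k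

theorem IsMinimalIdealOver.lbrk_self_le (hB : LeibnizId B) (hLie : ∀ y : L, B y y = 0)
    (hsolv : LeibIsSolvable B) (hN : IsLeibIdeal B N) (hA : IsMinimalIdealOver B N A) :
    lbrk B A A ≤ N := by
  by_contra hAA
  have hC : N ⊔ lbrk B A A = A := hA.2.2 _ (hN.sup (hA.1.lbrk hB hLie hA.1))
    (left_lt_sup.2 hAA) (sup_le hA.2.1.le hA.1.lbrk_le_left)
  exact hA.2.1.not_ge (le_of_le_sup_lbrk_self hsolv hN hC.ge)

theorem ne_top_of_lbrk_self_le (hLie : ∀ y : L, B y y = 0) (hM : ¬IsLeibIdeal B M)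
    (hAA : lbrk B A A ≤ M) : A ≠ ⊤ := by
  rintro rfl
  exact hM (isLeibIdeal_of_lbrk_top_le hLie ((lbrk_mono le_rfl le_top).trans hAA))

theorem IsMaxSubalg.sup_eq_top (hM : IsMaxSubalg B M) (hA : IsLeibIdeal B A) (hAM : ¬A ≤ M) :
    M ⊔ A = ⊤ :=
  hM.2.2 _ (hM.1.sup_of_isLeibIdeal hA) (left_lt_sup.2 hAM)

theorem IsMinimalIdealOver.eq_sup_lbrk (hLie : ∀ y : L, B y y = 0)
    (hA : IsMinimalIdealOver B N A) (hN : IsLeibIdeal B N) (hNM : N ≤ M)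
    (hMsub : IsLeibSubalg B M) (hM : ¬IsLeibIdeal B M) (hMA : M ⊔ A = ⊤)
    (hAA : lbrk B A A ≤ N) : A = N ⊔ lbrk B M A := by
  have hMA_le : lbrk B M A ≤ A := hA.1.lbrk_le_right
  have hMAN : ¬lbrk B M A ≤ N := fun h => hM <| isLeibIdeal_of_lbrk_top_le hLie <| by
    rw [← hMA]
    exact lbrk_sup_left_le.trans
      (sup_le (isLeibSubalg_iff.1 hMsub) (lbrk_comm hLie A M ▸ h.trans hNM))
  have hideal : IsLeibIdeal B (N ⊔ lbrk B M A) := by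
    refine isLeibIdeal_of_lbrk_top_le hLie <| lbrk_sup_right_le.trans <|
      sup_le (hN.lbrk_le_right.trans le_sup_left) ?_
    rw [← hMA]
    exact lbrk_sup_left_le.trans <| sup_le ((monotone_lbrk hMA_le).trans le_sup_right)
      ((lbrk_mono le_rfl hMA_le).trans (hAA.trans le_sup_left))
  exact (hA.2.2 _ hideal (left_lt_sup.2 hMAN) (sup_le hA.2.1.le hMA_le)).symm

theorem eq_sup_iterate_lbrk (h : A = N ⊔ lbrk B M A) (hN : lbrk B M N ≤ N) (k : ℕ) :
    A = N ⊔ (lbrk B M)^[k] A := by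
  induction k with
  | zero => exact (sup_eq_right.2 (le_sup_left.trans h.ge)).symm
  | succ k ih =>
    have hMA : lbrk B M A ≤ A := le_sup_right.trans h.ge
    refine le_antisymm ?_ (sup_le (le_sup_left.trans h.ge) (iterate_lbrk_le_of_lbrk_le hMA _))
    calc A = N ⊔ lbrk B M A := h
      _ ≤ N ⊔ lbrk B M (N ⊔ (lbrk B M)^[k] A) := sup_le_sup_left (monotone_lbrk ih.le) N
      _ ≤ N ⊔ (lbrk B M)^[k + 1] A := by
        rw [Function.iterate_succ_apply']
        exact sup_le le_sup_left (lbrk_sup_right_le.trans (sup_le_sup_right hN _))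

end MinimalIdeal

section NilpotentAction

variable {F L : Type*} [Field F] [AddCommGroup L] [Module F L] {B : L →ₗ[F] L →ₗ[F] L}
  {M N A S V : Submodule F L}

theorem iterate_lbrk_eq_bot_of_le {m k : ℕ} (hm : (lbrk B M)^[m] N = ⊥) (hk : m ≤ k) :
    (lbrk B M)^[k] N = ⊥ := by
  obtain ⟨d, rfl⟩ := Nat.exists_eq_add_of_le hk
  rw [add_comm, Function.iterate_add_apply, hm, iterate_lbrk_bot]

/-- Leibniz' identity moves each bracket with `M` either onto the `N`-factor or outside the
product; once `2 * m` of them are distributed, one of the three places has received `m`. -/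
theorem iterate_lbrk_lbrk_iterate_eq_bot (hB : LeibnizId B) (hLie : ∀ y : L, B y y = 0)
    (hN : IsLeibIdeal B N) {m : ℕ} (hm : (lbrk B M)^[m] N = ⊥) (j : ℕ) :
    ∀ i t, 2 * m ≤ i + j + t →
      (lbrk B M)^[t] (lbrk B ((lbrk B M)^[i] N) ((lbrk B M)^[j] S)) = ⊥ := by
  induction j with
  | zero =>
    intro i t hit
    rcases le_or_gt m i with hi | hi
    · simp [iterate_lbrk_eq_bot_of_le hm hi, iterate_lbrk_bot]
    · have hN_le : lbrk B ((lbrk B M)^[i] N) S ≤ N :=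
        (lbrk_mono (iterate_lbrk_le_of_lbrk_le hN.lbrk_le_right i) le_rfl).trans hN.lbrk_le_left
      exact le_bot_iff.1 <| ((monotone_lbrk.iterate t) hN_le).trans
        (iterate_lbrk_eq_bot_of_le hm (by omega)).le
  | succ j ih =>
    intro i t hit
    have hsplit : lbrk B ((lbrk B M)^[i] N) ((lbrk B M)^[j + 1] S) ≤
        lbrk B ((lbrk B M)^[i + 1] N) ((lbrk B M)^[j] S) ⊔
          lbrk B M (lbrk B ((lbrk B M)^[i] N) ((lbrk B M)^[j] S)) := by
      rw [Function.iterate_succ_apply', Function.iterate_succ_apply',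
        lbrk_comm hLie M ((lbrk B M)^[i] N)]
      exact lbrk_lbrk_le hB
    refine le_bot_iff.1 <| ((monotone_lbrk.iterate t) hsplit).trans <|
      (iterate_lbrk_sup_le t).trans ?_
    rw [← Function.iterate_succ_apply, ih (i + 1) t (by omega), ih i (t + 1) (by omega),
      sup_bot_eq]

theorem lbrk_iterate_lbrk_eq_bot (hB : LeibnizId B) (hLie : ∀ y : L, B y y = 0)
    (hN : IsLeibIdeal B N) {m : ℕ} (hm : (lbrk B M)^[m] N = ⊥) :
    lbrk B N ((lbrk B M)^[2 * m] S) = ⊥ := by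
  simpa using iterate_lbrk_lbrk_iterate_eq_bot (S := S) hB hLie hN hm (2 * m) 0 0 (by omega)

theorem lbrk_lbrk_eq_bot_of_le_sup_lbrk (hB : LeibnizId B) (hLie : ∀ y : L, B y y = 0)
    (hAA : lbrk B A A ≤ N) (hNV : lbrk B N V = ⊥) (hA : A ≤ V ⊔ lbrk B V V) :
    lbrk B A (lbrk B A A) = ⊥ := by
  have hNA : lbrk B N A = ⊥ := le_bot_iff.1 <| (lbrk_mono le_rfl hA).trans <|
    lbrk_sup_right_le.trans (by rw [hNV, lbrk_lbrk_self_eq_bot hB hNV, sup_bot_eq])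
  exact le_bot_iff.1 ((lbrk_mono le_rfl hAA).trans (lbrk_comm hLie A N ▸ hNA.le))

theorem isLeibSubalg_sup_lbrk_self (hB : LeibnizId B) (hLie : ∀ y : L, B y y = 0)
    (hNV : lbrk B N V = ⊥) (hVV : lbrk B V V ≤ N) : IsLeibSubalg B (V ⊔ lbrk B V V) := by
  have hVP : lbrk B V (lbrk B V V) = ⊥ :=
    le_bot_iff.1 ((lbrk_mono le_rfl hVV).trans (lbrk_comm hLie V N ▸ hNV.le))
  have hPP : lbrk B (lbrk B V V) (lbrk B V V) = ⊥ :=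
    le_bot_iff.1 ((lbrk_mono hVV le_rfl).trans (lbrk_lbrk_self_eq_bot hB hNV).le)
  rw [isLeibSubalg_iff]
  refine lbrk_sup_left_le.trans (sup_le ?_ ?_) <;> refine lbrk_sup_right_le.trans (sup_le ?_ ?_)
  · exact le_sup_right
  · simp [hVP]
  · simp [lbrk_comm hLie _ V, hVP]
  · simp [hPP]

theorem Submodule.le_of_span_singleton_sup_eq_top {x : L} {I : Submodule F L} (hIA : I ≤ A)
    (hA : A ≠ ⊤) (h : (F ∙ x) ⊔ I = ⊤) : A ≤ I := by
  have hx : x ∉ A := fun hx =>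
    hA (top_le_iff.1 (h ▸ sup_le ((Submodule.span_singleton_le_iff_mem x A).2 hx) hIA))
  have hdisj : (F ∙ x) ⊓ A = ⊥ :=
    (Submodule.disjoint_span_singleton.2 fun h => absurd h hx).symm.eq_bot
  have hmod : (I ⊔ (F ∙ x)) ⊓ A = I := by rw [sup_inf_assoc_of_le _ hIA, hdisj, sup_bot_eq]
  rw [sup_comm, h, top_inf_eq] at hmod
  exact hmod.le

theorem LeibSubalgNilpotent.exists_pow_apply_eq_zero (hS : LeibSubalgNilpotent B S) {x : L}
    (hx : x ∈ S) : ∃ k : ℕ, ∀ u ∈ S, (B x ^ k) u = 0 := by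
  obtain ⟨k, hk⟩ := hS
  refine ⟨k, fun u hu => ?_⟩
  have hmem : ∀ n, (B x ^ n) u ∈ leibLCSIn B S n := by
    intro n
    induction n with
    | zero => simpa [leibLCSIn] using hu
    | succ n ih =>
      rw [pow_succ', Module.End.mul_apply]
      exact mem_lbrk hx ih
  simpa [hk] using hmem k

end NilpotentAction

section Engel

variable {F L : Type*} [Field F] [AddCommGroup L] [Module F L] [FiniteDimensional F L]
  {B : L →ₗ[F] L →ₗ[F] L} {M V : Submodule F L}

theorem exists_iterate_lbrk_eq_bot (hB : LeibnizId B) (hLie : ∀ y : L, B y y = 0)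
    (hM : IsLeibSubalg B M) (hMV : lbrk B M V ≤ V)
    (h : ∀ x ∈ M, ∃ k : ℕ, ∀ u ∈ V, (B x ^ k) u = 0) : ∃ j, (lbrk B M)^[j] V = ⊥ := by
  -- Engel's theorem for the Lie module `V` of the Lie subalgebra `M` of `(L, B)`.
  let _ : LieRing L :=
    { bracket := fun a b => B a b
      add_lie := fun a b c => by simp only [map_add, LinearMap.add_apply]
      lie_add := fun a b c => map_add (B a) b c
      lie_self := hLie
      leibniz_lie := hB }
  let _ : LieAlgebra F L := { lie_smul := fun c a b => map_smul (B a) c b }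
  let K : LieSubalgebra F L := { toSubmodule := M, lie_mem' := fun ha hb => hM _ ha _ hb }
  let W : LieSubmodule F K L :=
    { toSubmodule := V, lie_mem := fun {x _} hv => hMV (mem_lbrk x.2 hv) }
  have hW : LieModule.IsNilpotent K W := by
    refine (LieModule.isNilpotent_iff_forall' (R := F)).2 fun x => ?_
    obtain ⟨k, hk⟩ := h x x.2
    have hpow : ∀ (n : ℕ) (w : W), ((LieModule.toEnd F K W x ^ n) w : L) = (B x ^ n) w := by
      intro n
      induction n with
      | zero => exact fun _ => rfl
      | succ n ih =>
        intro w
        rw [pow_succ', Module.End.mul_apply, pow_succ', Module.End.mul_apply, ← ih]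
        rfl
    exact ⟨k, LinearMap.ext fun w => Subtype.ext ((hpow k w).trans (hk w w.2))⟩
  obtain ⟨j, hj⟩ := W.isNilpotent_iff_exists_lcs_eq_bot.1 hW
  have hlcs : ∀ n, (lbrk B M)^[n] V ≤ (W.lcs n : Submodule F L) := by
    intro n
    induction n with
    | zero => exact le_rfl
    | succ n ih =>
      rw [Function.iterate_succ_apply', LieSubmodule.lcs_succ]
      exact lbrk_le fun x hx v hv =>
        LieSubmodule.lie_mem_lie (x := (⟨x, hx⟩ : K)) (LieSubmodule.mem_top _) (ih hv)
  exact ⟨j, le_bot_iff.1 (by simpa [hj] using hlcs j)⟩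

theorem exists_iterate_lbrk_eq_bot_of_span_singleton_sup_ne_top (hB : LeibnizId B)
    (hLie : ∀ y : L, B y y = 0)
    (hproper : ∀ S : Submodule F L, IsLeibSubalg B S → S ≠ ⊤ → LeibSubalgNilpotent B S)
    {N : Submodule F L} (hM : IsLeibSubalg B M) (hMV : lbrk B M V ≤ V) (hNV : lbrk B N V = ⊥)
    (hVV : lbrk B V V ≤ N) (hne : ∀ x ∈ M, (F ∙ x) ⊔ (V ⊔ lbrk B V V) ≠ ⊤) :
    ∃ j, (lbrk B M)^[j] V = ⊥ := by
  refine exists_iterate_lbrk_eq_bot hB hLie hM hMV fun x hx => ?_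
  have hMI : lbrk B M (V ⊔ lbrk B V V) ≤ V ⊔ lbrk B V V :=
    lbrk_sup_right_le.trans (sup_le_sup hMV (lbrk_lbrk_self_le hB hMV))
  have hSx : IsLeibSubalg B ((F ∙ x) ⊔ (V ⊔ lbrk B V V)) :=
    isLeibSubalg_span_singleton_sup hLie (isLeibSubalg_sup_lbrk_self hB hLie hNV hVV)
      ((lbrk_mono ((Submodule.span_singleton_le_iff_mem x M).2 hx) le_rfl).trans hMI)
  obtain ⟨k, hk⟩ := (hproper _ hSx (hne x hx)).exists_pow_apply_eq_zero
    (Submodule.mem_sup_left (Submodule.mem_span_singleton_self x))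
  exact ⟨k, fun u hu => hk u (Submodule.mem_sup_right (Submodule.mem_sup_left hu))⟩

end Engel

/-- if in addition `L` is a Lie algebra (all squares vanish), then `A³ = 0`. -/
theorem stmt8 {F L : Type*} [Field F] [AddCommGroup L] [Module F L] [FiniteDimensional F L]
    (B : L →ₗ[F] L →ₗ[F] L) (hB : LeibnizId B) (hLie : ∀ y : L, B y y = 0)
    (hmin : MinNonnilpotent B)
    (M N : Submodule F L) (hM : IsMaxSubalg B M) (hself : leibNormalizer B M = M)
    (hN : IsCore B M N)
    (A : Submodule F L) (hA : IsLeibIdeal B A ∧ N < A ∧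
      ∀ C : Submodule F L, IsLeibIdeal B C → N < C → C ≤ A → C = A) :
    lbrk B A (lbrk B A A) = ⊥ := by
  obtain ⟨-, hsolv, hproper⟩ := hmin
  obtain ⟨hNid, hNM, hNcore⟩ := hN
  have hMnot : ¬IsLeibIdeal B M := fun h =>
    hM.2.1 (hself ▸ leibNormalizer_eq_top_of_isLeibIdeal h)
  have hAA : lbrk B A A ≤ N := IsMinimalIdealOver.lbrk_self_le hB hLie hsolv hNid hA
  have hMA : M ⊔ A = ⊤ := hM.sup_eq_top hA.1 fun h => hA.2.1.not_ge (hNcore A hA.1 h)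
  have hA_eq : ∀ k, A = N ⊔ (lbrk B M)^[k] A := eq_sup_iterate_lbrk
    (IsMinimalIdealOver.eq_sup_lbrk hLie hA hNid hNM hM.1 hMnot hMA hAA) hNid.lbrk_le_right
  obtain ⟨m, hm⟩ := hproper M hM.1 hM.2.1
  set V := (lbrk B M)^[2 * m] A
  have hNV : lbrk B N V = ⊥ := lbrk_iterate_lbrk_eq_bot hB hLie hNid
    (le_bot_iff.1 (hm ▸ iterate_lbrk_le_leibLCSIn hNM m))
  have hVA : V ≤ A := iterate_lbrk_le_of_lbrk_le hA.1.lbrk_le_right _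
  have hVV : lbrk B V V ≤ N := (lbrk_mono hVA hVA).trans hAA
  by_cases hx : ∃ x ∈ M, (F ∙ x) ⊔ (V ⊔ lbrk B V V) = ⊤
  · obtain ⟨x, -, hx⟩ := hx
    exact lbrk_lbrk_eq_bot_of_le_sup_lbrk hB hLie hAA hNV <|
      Submodule.le_of_span_singleton_sup_eq_top (sup_le hVA (hVV.trans hA.2.1.le))
        (ne_top_of_lbrk_self_le hLie hMnot (hAA.trans hNM)) hx
  · obtain ⟨j, hj⟩ := exists_iterate_lbrk_eq_bot_of_span_singleton_sup_ne_top hB hLie hproper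
      hM.1 (lbrk_iterate_le_iterate hA.1.lbrk_le_right _) hNV hVV fun x hxM h => hx ⟨x, hxM, h⟩
    have hAN := hA_eq (j + 2 * m)
    rw [Function.iterate_add_apply, hj, sup_bot_eq] at hAN
    exact absurd hAN hA.2.1.ne'
end

section
/- Let L be a finite-dimensional minimal nonnilpotent left Leibniz algebra with self-normalizing maximal subalgebra M of core N. Then M/N is one-dimensional. -/
set_option linter.unnecessarySimpa false

section Stmt9Helpers

variable {F L : Type*} [Field F] [AddCommGroup L] [Module F L] (B : L →ₗ[F] L →ₗ[F] L)

lemma stmt9_mem_lbrk {S T : Submodule F L} {s t : L} (hs : s ∈ S) (ht : t ∈ T) :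
    B s t ∈ lbrk B S T := Submodule.subset_span ⟨s, hs, t, ht, rfl⟩

lemma stmt9_lbrk_le {S T X : Submodule F L} (h : ∀ s ∈ S, ∀ t ∈ T, B s t ∈ X) :
    lbrk B S T ≤ X := Submodule.span_le.2 (by rintro z ⟨s, hs, t, ht, rfl⟩; exact h s hs t ht)

lemma stmt9_lbrk_mono {S T S' T' : Submodule F L} (h1 : S ≤ S') (h2 : T ≤ T') :
    lbrk B S T ≤ lbrk B S' T' := stmt9_lbrk_le B fun s hs t ht => stmt9_mem_lbrk B (h1 hs) (h2 ht)

lemma stmt9_lbrk_apply {S T X : Submodule F L} (f : L →ₗ[F] L)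
    (h : ∀ s ∈ S, ∀ t ∈ T, f (B s t) ∈ X) : ∀ z ∈ lbrk B S T, f z ∈ X :=
  fun z hz => (stmt9_lbrk_le B (X := X.comap f) h) hz

lemma stmt9_lbrk_sup_right {S T T' : Submodule F L} :
    lbrk B S (T ⊔ T') ≤ lbrk B S T ⊔ lbrk B S T' := by
  apply stmt9_lbrk_le
  intro s hs t ht
  obtain ⟨t1, ht1, t2, ht2, rfl⟩ := Submodule.mem_sup.1 ht
  rw [map_add]
  exact Submodule.add_mem _ (Submodule.mem_sup_left (stmt9_mem_lbrk B hs ht1))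
    (Submodule.mem_sup_right (stmt9_mem_lbrk B hs ht2))

lemma stmt9_lbrk_sup_left {S S' T : Submodule F L} :
    lbrk B (S ⊔ S') T ≤ lbrk B S T ⊔ lbrk B S' T := by
  apply stmt9_lbrk_le
  intro s hs t ht
  obtain ⟨s1, hs1, s2, hs2, rfl⟩ := Submodule.mem_sup.1 hs
  rw [map_add, LinearMap.add_apply]
  exact Submodule.add_mem _ (Submodule.mem_sup_left (stmt9_mem_lbrk B hs1 ht))
    (Submodule.mem_sup_right (stmt9_mem_lbrk B hs2 ht))

lemma stmt9_sup_ideal {S T : Submodule F L} (hS : IsLeibIdeal B S) (hT : IsLeibIdeal B T) :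
    IsLeibIdeal B (S ⊔ T) := by
  constructor
  · intro x y hy
    obtain ⟨s, hs, t, ht, rfl⟩ := Submodule.mem_sup.1 hy
    rw [map_add]
    exact Submodule.add_mem _ (Submodule.mem_sup_left (hS.1 x s hs))
      (Submodule.mem_sup_right (hT.1 x t ht))
  · intro y hy x
    obtain ⟨s, hs, t, ht, rfl⟩ := Submodule.mem_sup.1 hy
    rw [map_add, LinearMap.add_apply]
    exact Submodule.add_mem _ (Submodule.mem_sup_left (hS.2 s hs x))
      (Submodule.mem_sup_right (hT.2 t ht x))

lemma stmt9_leib_rw (hB : LeibnizId B) (a b c : L) :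
    B (B a b) c = B a (B b c) - B b (B a c) := by
  rw [hB a b c]; abel

/-- `[X ⊔ N, Y ⊔ N] ≤ [X,Y] ⊔ N` when `N` is an ideal. -/
lemma stmt9_lbrk_sup_N {X Y N : Submodule F L} (hN : IsLeibIdeal B N) :
    lbrk B (X ⊔ N) (Y ⊔ N) ≤ lbrk B X Y ⊔ N := by
  apply stmt9_lbrk_le
  intro s hs t ht
  obtain ⟨x, hx, n, hn, rfl⟩ := Submodule.mem_sup.1 hs
  obtain ⟨y, hy, n', hn', rfl⟩ := Submodule.mem_sup.1 ht
  have : B (x + n) (y + n') = B x y + (B x n' + B n y + B n n') := by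
    simp only [map_add, LinearMap.add_apply]; abel
  rw [this]
  refine Submodule.add_mem _ (Submodule.mem_sup_left (stmt9_mem_lbrk B hx hy))
    (Submodule.mem_sup_right ?_)
  exact Submodule.add_mem _ (Submodule.add_mem _ (hN.1 x n' hn') (hN.2 n hn y)) (hN.2 n hn n')

lemma stmt9_LCSIn_le {S : Submodule F L} (hS : IsLeibSubalg B S) :
    ∀ k, leibLCSIn B S k ≤ S := by
  intro k
  induction k with
  | zero => exact le_rfl
  | succ k ih => exact stmt9_lbrk_le B fun s hs t ht => hS s hs t (ih ht)

end Stmt9Helpers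

/-- for minimal nonnilpotent `L` with self-normalizing maximal subalgebra `M`
of core `N`, the quotient `M/N` is one-dimensional. -/
theorem stmt9 {F L : Type*} [Field F] [AddCommGroup L] [Module F L] [FiniteDimensional F L]
    (B : L →ₗ[F] L →ₗ[F] L) (hB : LeibnizId B) (hmin : MinNonnilpotent B)
    (M N : Submodule F L) (hM : IsMaxSubalg B M) (hself : leibNormalizer B M = M)
    (hN : IsCore B M N) :
    Module.finrank F (M ⧸ N.comap M.subtype) = 1 := by
  classical
  -- ## Step B : N < M
  have hNM : N ≠ M := by
    intro h
    have hMid : IsLeibIdeal B M := h ▸ hN.1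
    have htop : leibNormalizer B M = ⊤ := by
      rw [eq_top_iff]
      intro x _
      exact fun m hm => ⟨hMid.1 x m hm, hMid.2 m hm x⟩
    exact hM.2.1 (by rw [← hself, htop])
  have hNltM : N < M := lt_of_le_of_ne hN.2.1 hNM
  -- ## Step C : a minimal ideal A above N
  have hex : ∃ n : ℕ, ∃ I : Submodule F L,
      (IsLeibIdeal B I ∧ N < I) ∧ Module.finrank F I = n := by
    refine ⟨_, ⊤, ⟨⟨fun _ _ _ => Submodule.mem_top, fun _ _ _ => Submodule.mem_top⟩, ?_⟩, rfl⟩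
    exact lt_of_le_of_lt hN.2.1 (lt_top_iff_ne_top.2 hM.2.1)
  obtain ⟨A, ⟨hAid, hNA⟩, hArank⟩ := Nat.find_spec hex
  have hAmin : ∀ I : Submodule F L, IsLeibIdeal B I → N < I → I ≤ A → I = A := by
    intro I hI hNI hIA
    refine Submodule.eq_of_le_of_finrank_le hIA ?_
    rw [hArank]
    by_contra hc
    push_neg at hc
    exact Nat.find_min hex hc ⟨I, ⟨hI, hNI⟩, rfl⟩
  -- ## Step D : [A,A] ≤ N
  have hAAN : lbrk B A A ≤ N := by
    by_contra hc
    have hI1id : IsLeibIdeal B (lbrk B A A ⊔ N) := by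
      refine stmt9_sup_ideal B ⟨?_, ?_⟩ hN.1
      · intro x y hy
        refine stmt9_lbrk_apply B (B x) ?_ y hy
        intro a ha a' ha'
        rw [hB x a a']
        exact Submodule.add_mem _ (stmt9_mem_lbrk B (hAid.1 x a ha) ha')
          (stmt9_mem_lbrk B ha (hAid.1 x a' ha'))
      · intro y hy x
        refine stmt9_lbrk_apply B (B.flip x) ?_ y hy
        intro a ha a' ha'
        simp only [LinearMap.flip_apply]
        rw [stmt9_leib_rw B hB a a' x]
        exact Submodule.sub_mem _ (stmt9_mem_lbrk B ha (hAid.2 a' ha' x))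
          (stmt9_mem_lbrk B ha' (hAid.2 a ha x))
    have hlt : N < lbrk B A A ⊔ N :=
      lt_of_le_of_ne le_sup_right (fun h => hc (le_sup_left.trans h.ge))
    have hle : lbrk B A A ⊔ N ≤ A :=
      sup_le (stmt9_lbrk_le B fun a ha a' ha' => hAid.1 a a' ha') hNA.le
    have hEq : lbrk B A A ⊔ N = A := hAmin _ hI1id hlt hle
    obtain ⟨ns, hns⟩ := hmin.2.1
    have hder : ∀ k, A ≤ leibDerived B k ⊔ N := by
      intro k
      induction k with
      | zero => exact le_trans le_top le_sup_left
      | succ k ih =>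
        calc A = lbrk B A A ⊔ N := hEq.symm
          _ ≤ lbrk B (leibDerived B k ⊔ N) (leibDerived B k ⊔ N) ⊔ N :=
            sup_le_sup_right (stmt9_lbrk_mono B ih ih) _
          _ ≤ (lbrk B (leibDerived B k) (leibDerived B k) ⊔ N) ⊔ N :=
            sup_le_sup_right (stmt9_lbrk_sup_N B hN.1) _
          _ = leibDerived B (k + 1) ⊔ N := by rw [sup_assoc, sup_idem]; rfl
    have := hder ns
    rw [hns, bot_sup_eq] at this
    exact hNA.not_ge this
  -- ## Step E/F : M ⊔ A = ⊤
  have hAnotM : ¬ A ≤ M := fun h => hNA.not_ge (hN.2.2 A hAid h)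
  have hMA : M ⊔ A = ⊤ := by
    refine hM.2.2 _ ?_ (lt_of_le_of_ne le_sup_left (fun h => hAnotM (le_sup_right.trans h.ge)))
    intro x hx y hy
    obtain ⟨m, hm, a, ha, rfl⟩ := Submodule.mem_sup.1 hx
    obtain ⟨m', hm', a', ha', rfl⟩ := Submodule.mem_sup.1 hy
    have hre : B (m + a) (m' + a') = B m m' + B m a' + B a m' + B a a' := by
      simp only [map_add, LinearMap.add_apply]; abel
    rw [hre]
    refine Submodule.add_mem _ (Submodule.add_mem _ (Submodule.add_mem _ ?_ ?_) ?_) ?_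
    · exact Submodule.mem_sup_left (hM.1 m hm m' hm')
    · exact Submodule.mem_sup_right (hAid.1 m a' ha')
    · exact Submodule.mem_sup_right (hAid.2 a ha m')
    · exact Submodule.mem_sup_right (hAid.1 a a' ha')
  -- a helper to decompose any `x : L`
  have hdec : ∀ x : L, ∃ m ∈ M, ∃ a ∈ A, x = m + a := by
    intro x
    have : x ∈ M ⊔ A := hMA ▸ Submodule.mem_top
    obtain ⟨m, hm, a, ha, h⟩ := Submodule.mem_sup.1 this
    exact ⟨m, hm, a, ha, h.symm⟩
  have hNleA : N ≤ A := hNA.le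
  -- ## Step G : M ⊓ A = N
  have hMAint : M ⊓ A = N := by
    have hMAid : IsLeibIdeal B (M ⊓ A) := by
      constructor
      · intro x z hz
        obtain ⟨m, hm, a, ha, rfl⟩ := hdec x
        rw [map_add, LinearMap.add_apply]
        refine Submodule.add_mem _ ⟨hM.1 m hm z hz.1, hAid.1 m z hz.2⟩ ?_
        have : B a z ∈ N := hAAN (stmt9_mem_lbrk B ha hz.2)
        exact ⟨hN.2.1 this, hNleA this⟩
      · intro z hz x
        obtain ⟨m, hm, a, ha, rfl⟩ := hdec x
        rw [map_add]
        refine Submodule.add_mem _ ⟨hM.1 z hz.1 m hm, hAid.2 z hz.2 m⟩ ?_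
        have : B z a ∈ N := hAAN (stmt9_mem_lbrk B hz.2 ha)
        exact ⟨hN.2.1 this, hNleA this⟩
    exact le_antisymm (hN.2.2 _ hMAid inf_le_left) (le_inf hN.2.1 hNleA)
  -- ## Step I : M² ⊔ N ≠ M
  have hM2M : lbrk B M M ≤ M := stmt9_lbrk_le B fun s hs t ht => hM.1 s hs t ht
  have hM2Nne : lbrk B M M ⊔ N ≠ M := by
    intro hEq
    obtain ⟨n, hn⟩ := hmin.2.2 M hM.1 hM.2.1
    have key : ∀ k, leibLCSIn B M k ⊔ N = M := by
      intro k
      induction k with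
      | zero => exact sup_eq_left.2 hN.2.1
      | succ k ih =>
        refine le_antisymm (sup_le (le_trans (stmt9_LCSIn_le B hM.1 (k+1)) le_rfl) hN.2.1) ?_
        have h1 : lbrk B M M ≤ lbrk B M (leibLCSIn B M k ⊔ N) :=
          stmt9_lbrk_mono B le_rfl ih.ge
        have h2 : lbrk B M (leibLCSIn B M k ⊔ N) ≤
            leibLCSIn B M (k+1) ⊔ N := by
          refine le_trans (stmt9_lbrk_sup_right B) (sup_le le_sup_left ?_)
          refine le_trans (stmt9_lbrk_le B fun s hs t ht => hN.1.1 s t ht) le_sup_right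
        calc M = lbrk B M M ⊔ N := hEq.symm
          _ ≤ (leibLCSIn B M (k+1) ⊔ N) ⊔ N := sup_le_sup_right (h1.trans h2) _
          _ = leibLCSIn B M (k+1) ⊔ N := by rw [sup_assoc, sup_idem]
    have := key n
    rw [hn, bot_sup_eq] at this
    exact hNM this
  -- ## Step J : main lemma
  have main : ∀ W : Submodule F L, lbrk B M M ⊔ N ≤ W → W < M → W ≤ N := by
    intro W hW1 hW2
    have hWM : W ≤ M := hW2.le
    have hNW : N ≤ W := le_sup_right.trans hW1
    have hM2W : lbrk B M M ≤ W := le_sup_left.trans hW1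
    set U : Submodule F L := A ⊔ W with hUdef
    have hAU0 : A ≤ U := le_sup_left
    have hWU0 : W ≤ U := le_sup_right
    have hdecU : ∀ u ∈ U, ∃ a ∈ A, ∃ w ∈ W, u = a + w := by
      intro u hu
      obtain ⟨a, ha, w, hw, h⟩ := Submodule.mem_sup.1 hu
      exact ⟨a, ha, w, hw, h.symm⟩
    -- U is a subalgebra
    have hUsub : IsLeibSubalg B U := by
      intro x hx y hy
      obtain ⟨a, ha, w, hw, rfl⟩ := hdecU x hx
      obtain ⟨a', ha', w', hw', rfl⟩ := hdecU y hy
      have hre : B (a + w) (a' + w') = B a a' + B a w' + B w a' + B w w' := by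
        simp only [map_add, LinearMap.add_apply]; abel
      rw [hre]
      refine Submodule.add_mem _ (Submodule.add_mem _ (Submodule.add_mem _ ?_ ?_) ?_) ?_
      · exact hAU0 (hAid.1 a a' ha')
      · exact hAU0 (hAid.2 a ha w')
      · exact hAU0 (hAid.1 w a' ha')
      · exact hWU0 (hM2W (stmt9_mem_lbrk B (hWM hw) (hWM hw')))
    -- U is an ideal of L
    have hUid : IsLeibIdeal B U := by
      constructor
      · intro x u hu
        obtain ⟨m, hm, a'', ha'', rfl⟩ := hdec x
        obtain ⟨a, ha, w, hw, rfl⟩ := hdecU u hu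
        have hre : B (m + a'') (a + w) = B m a + B m w + B a'' a + B a'' w := by
          simp only [map_add, LinearMap.add_apply]; abel
        rw [hre]
        refine Submodule.add_mem _ (Submodule.add_mem _ (Submodule.add_mem _ ?_ ?_) ?_) ?_
        · exact hAU0 (hAid.1 m a ha)
        · exact hWU0 (hM2W (stmt9_mem_lbrk B hm (hWM hw)))
        · exact hAU0 (hAid.1 a'' a ha)
        · exact hAU0 (hAid.2 a'' ha'' w)
      · intro u hu x
        obtain ⟨m, hm, a'', ha'', rfl⟩ := hdec x
        obtain ⟨a, ha, w, hw, rfl⟩ := hdecU u hu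
        have hre : B (a + w) (m + a'') = B a m + B a a'' + B w m + B w a'' := by
          simp only [map_add, LinearMap.add_apply]; abel
        rw [hre]
        refine Submodule.add_mem _ (Submodule.add_mem _ (Submodule.add_mem _ ?_ ?_) ?_) ?_
        · exact hAU0 (hAid.2 a ha m)
        · exact hAU0 (hAid.1 a a'' ha'')
        · exact hWU0 (hM2W (stmt9_mem_lbrk B (hWM hw) hm))
        · exact hAU0 (hAid.1 w a'' ha'')
    -- U is proper
    have hUne : U ≠ ⊤ := by
      intro hU
      obtain ⟨m0, hm0M, hm0W⟩ := SetLike.exists_of_lt hW2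
      have hm0U : m0 ∈ U := hU ▸ Submodule.mem_top
      obtain ⟨a, ha, w, hw, hsum⟩ := hdecU m0 hm0U
      have haM : a ∈ M := by
        have : a = m0 - w := by rw [hsum]; abel
        rw [this]; exact Submodule.sub_mem _ hm0M (hWM hw)
      have haN : a ∈ N := hMAint ▸ (⟨haM, ha⟩ : a ∈ M ⊓ A)
      exact hm0W (by rw [hsum]; exact Submodule.add_mem _ (hNW haN) hw)
    obtain ⟨nU, hnU⟩ := hmin.2.2 U hUsub hUne
    -- products of LCS terms
    have hLCS : ∀ a b : ℕ,
        lbrk B (leibLCSIn B U a) (leibLCSIn B U b) ≤ leibLCSIn B U (a + b + 1) := by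
      intro a
      induction a with
      | zero =>
        intro b
        rw [Nat.zero_add]
        exact le_of_eq (by simp [leibLCSIn])
      | succ a iha =>
        intro b
        apply stmt9_lbrk_le
        intro s hs t ht
        have hgoal : ∀ z ∈ lbrk B U (leibLCSIn B U a), B.flip t z ∈
            leibLCSIn B U (a + 1 + b + 1) := by
          refine stmt9_lbrk_apply B (B.flip t) ?_
          intro u hu z hz
          simp only [LinearMap.flip_apply]
          rw [stmt9_leib_rw B hB u z t]
          have h1 : B z t ∈ leibLCSIn B U (a + b + 1) :=
            iha b (stmt9_mem_lbrk B hz ht)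
          have h2 : B u (B z t) ∈ leibLCSIn B U (a + b + 1 + 1) :=
            stmt9_mem_lbrk B hu h1
          have h3 : B u t ∈ leibLCSIn B U (b + 1) := stmt9_mem_lbrk B hu ht
          have h4 : B z (B u t) ∈ leibLCSIn B U (a + (b + 1) + 1) :=
            iha (b + 1) (stmt9_mem_lbrk B hz h3)
          have e1 : a + 1 + b + 1 = a + b + 1 + 1 := by omega
          have e2 : a + (b + 1) + 1 = a + 1 + b + 1 := by omega
          rw [e1]
          exact Submodule.sub_mem _ h2 (e1 ▸ e2 ▸ h4)
        have := hgoal s hs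
        simpa using this
    -- the descending chain of ideals
    set aj : ℕ → Submodule F L :=
      fun j => Nat.rec A (fun _ prev => lbrk B U prev ⊔ lbrk B prev U) j with hajdef
    have aj_succ : ∀ j, aj (j+1) = lbrk B U (aj j) ⊔ lbrk B (aj j) U := fun j => rfl
    have aj_le_A : ∀ j, aj j ≤ A := by
      intro j
      induction j with
      | zero => exact le_rfl
      | succ j ih =>
        rw [aj_succ]
        refine sup_le (stmt9_lbrk_le B fun u hu p hp => hAid.1 u p (ih hp))
          (stmt9_lbrk_le B fun p hp u hu => hAid.2 p (ih hp) u)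
    have aj_ideal : ∀ j, IsLeibIdeal B (aj j) := by
      intro j
      induction j with
      | zero => exact hAid
      | succ j ih =>
        rw [aj_succ]
        constructor
        · intro x y hy
          obtain ⟨y1, hy1, y2, hy2, rfl⟩ := Submodule.mem_sup.1 hy
          rw [map_add]
          refine Submodule.add_mem _ (Submodule.mem_sup_left ?_) (Submodule.mem_sup_right ?_)
          · refine stmt9_lbrk_apply B (B x) ?_ y1 hy1
            intro u hu p hp
            rw [hB x u p]
            exact Submodule.add_mem _ (stmt9_mem_lbrk B (hUid.1 x u hu) hp)
              (stmt9_mem_lbrk B hu (ih.1 x p hp))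
          · refine stmt9_lbrk_apply B (B x) ?_ y2 hy2
            intro p hp u hu
            rw [hB x p u]
            exact Submodule.add_mem _ (stmt9_mem_lbrk B (ih.1 x p hp) hu)
              (stmt9_mem_lbrk B hp (hUid.1 x u hu))
        · intro y hy x
          obtain ⟨y1, hy1, y2, hy2, rfl⟩ := Submodule.mem_sup.1 hy
          rw [map_add, LinearMap.add_apply]
          refine Submodule.add_mem _ ?_ ?_
          · refine stmt9_lbrk_apply B (B.flip x) ?_ y1 hy1
            intro u hu p hp
            simp only [LinearMap.flip_apply]
            rw [stmt9_leib_rw B hB u p x]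
            exact Submodule.sub_mem _
              (Submodule.mem_sup_left (stmt9_mem_lbrk B hu (ih.2 p hp x)))
              (Submodule.mem_sup_right (stmt9_mem_lbrk B hp (hUid.2 u hu x)))
          · refine stmt9_lbrk_apply B (B.flip x) ?_ y2 hy2
            intro p hp u hu
            simp only [LinearMap.flip_apply]
            rw [stmt9_leib_rw B hB p u x]
            exact Submodule.sub_mem _
              (Submodule.mem_sup_right (stmt9_mem_lbrk B hp (hUid.2 u hu x)))
              (Submodule.mem_sup_left (stmt9_mem_lbrk B hu (ih.2 p hp x)))
    have aj_le_uk : ∀ j, aj j ≤ leibLCSIn B U j := by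
      intro j
      induction j with
      | zero => exact hAU0
      | succ j ih =>
        rw [aj_succ]
        refine sup_le ?_ ?_
        · exact stmt9_lbrk_mono B le_rfl ih
        · refine le_trans (stmt9_lbrk_mono B ih (le_rfl : leibLCSIn B U 0 ≤ U)) ?_
          exact hLCS j 0
    -- find the last index not inside N
    have hfind : ∃ k, aj k ≤ N := ⟨nU, le_trans (aj_le_uk nU) (hnU ▸ bot_le)⟩
    have hk0 : Nat.find hfind ≠ 0 := by
      intro h
      have := Nat.find_spec hfind
      rw [h] at this
      exact hNA.not_ge this
    obtain ⟨j, hjk⟩ := Nat.exists_eq_succ_of_ne_zero hk0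
    have hj2 : aj (j + 1) ≤ N := by
      have := Nat.find_spec hfind
      rwa [hjk] at this
    have hj1 : ¬ aj j ≤ N := Nat.find_min hfind (by omega)
    -- aj j ⊔ N = A
    have hsupA : aj j ⊔ N = A := by
      refine hAmin _ (stmt9_sup_ideal B (aj_ideal j) hN.1) ?_ (sup_le (aj_le_A j) hNleA)
      exact lt_of_le_of_ne le_sup_right (fun h => hj1 (le_sup_left.trans h.ge))
    -- [U,A] ≤ N and [A,U] ≤ N
    have hUAN : lbrk B U A ≤ N := by
      rw [← hsupA]
      refine le_trans (stmt9_lbrk_sup_right B) (sup_le ?_ ?_)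
      · exact le_trans (le_sup_left.trans (aj_succ j).ge) hj2
      · exact stmt9_lbrk_le B fun s _ t ht => hN.1.1 s t ht
    have hAUN : lbrk B A U ≤ N := by
      rw [← hsupA]
      refine le_trans (stmt9_lbrk_sup_left B) (sup_le ?_ ?_)
      · exact le_trans (le_sup_right.trans (aj_succ j).ge) hj2
      · exact stmt9_lbrk_le B fun s hs t _ => hN.1.2 s hs t
    -- W is an ideal of L
    have hWid : IsLeibIdeal B W := by
      constructor
      · intro x w hw
        obtain ⟨m, hm, a, ha, rfl⟩ := hdec x
        rw [map_add, LinearMap.add_apply]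
        refine Submodule.add_mem _ (hM2W (stmt9_mem_lbrk B hm (hWM hw))) ?_
        exact hNW (hAUN (stmt9_mem_lbrk B ha (hWU0 hw)))
      · intro w hw x
        obtain ⟨m, hm, a, ha, rfl⟩ := hdec x
        rw [map_add]
        refine Submodule.add_mem _ (hM2W (stmt9_mem_lbrk B (hWM hw) hm)) ?_
        exact hNW (hUAN (stmt9_mem_lbrk B (hWU0 hw) ha))
    exact hN.2.2 W hWid hWM
  -- ## Step K : M² ≤ N
  have hM2N : lbrk B M M ≤ N := by
    have h := main (lbrk B M M ⊔ N) le_rfl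
      (lt_of_le_of_ne (sup_le hM2M hN.2.1) hM2Nne)
    exact le_sup_left.trans h
  -- ## Step L : for x ∈ M \ N, N ⊔ span{x} = M
  have key : ∀ x ∈ M, x ∉ N → N ⊔ Submodule.span F {x} = M := by
    intro x hxM hxN
    by_contra hne
    have hle : N ⊔ Submodule.span F {x} ≤ M :=
      sup_le hN.2.1 ((Submodule.span_singleton_le_iff_mem x M).2 hxM)
    have h := main _ (sup_le (hM2N.trans le_sup_left) le_sup_left)
      (lt_of_le_of_ne hle hne)
    exact hxN (h (Submodule.mem_sup_right (Submodule.mem_span_singleton_self x)))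
  -- ## Step M : conclude
  obtain ⟨x0, hx0M, hx0N⟩ := SetLike.exists_of_lt hNltM
  have hspan := key x0 hx0M hx0N
  have hv : (Submodule.Quotient.mk (⟨x0, hx0M⟩ : M) : M ⧸ N.comap M.subtype) ≠ 0 := by
    intro h
    exact hx0N ((Submodule.Quotient.mk_eq_zero (N.comap M.subtype)).mp h)
  refine finrank_eq_one _ hv ?_
  intro w
  obtain ⟨y, rfl⟩ := Submodule.Quotient.mk_surjective _ w
  have hy : (y : L) ∈ N ⊔ Submodule.span F {x0} := hspan ▸ y.2
  obtain ⟨n, hn, z, hz, hyz⟩ := Submodule.mem_sup.1 hy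
  obtain ⟨c, rfl⟩ := Submodule.mem_span_singleton.1 hz
  refine ⟨c, ?_⟩
  rw [← Submodule.Quotient.mk_smul, Submodule.Quotient.eq, Submodule.mem_comap]
  have hcoe : (M.subtype) (c • (⟨x0, hx0M⟩ : M) - y) = c • x0 - (y : L) := by simp
  rw [hcoe, ← hyz]
  have habel : c • x0 - (n + c • x0) = -n := by abel
  rw [habel]
  exact N.neg_mem hn
end
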